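/- For every integer r ≥ 3 there exist an r-connected r-regular finite simple graph G with an even number of vertices and a set 𝒪 of pairwise vertex-disjoint odd cycles of G with the following property: for every integer t ≥ 1, if F is a t-factor of G such that E(F) ∩ E(O) ≠ ∅ for every O ∈ 𝒪, then 3t ≥ r. -/

import Mathlib

open SimpleGraph

namespace PaperFormalization

variable {V : Type*}

/-- The degree of a vertex in a subgraph. -/
noncomputable def sdeg {G : SimpleGraph V} (H : G.Subgraph) (v : V) : ℕ :=
  (H.neighborSet v).ncard

/-- `H` is a `t`-factor of `G`: a spanning subgraph in which every vertex has degree `t`. -/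
def IsTFactor {G : SimpleGraph V} (H : G.Subgraph) (t : ℕ) : Prop :=
  H.IsSpanning ∧ ∀ v : V, sdeg H v = t

/-- A cycle of `G`: a connected 2-regular subgraph. -/
def IsCycleSG {G : SimpleGraph V} (C : G.Subgraph) : Prop :=
  C.Connected ∧ ∀ v ∈ C.verts, sdeg C v = 2

/-- An odd cycle: a cycle with an odd number of edges. -/
def IsOddCycleSG {G : SimpleGraph V} (C : G.Subgraph) : Prop :=
  IsCycleSG C ∧ Odd C.edgeSet.ncard

/-- A family of subgraphs is pairwise edge-disjoint. -/
def PairwiseEdgeDisjoint {G : SimpleGraph V} (𝒪 : Set G.Subgraph) : Prop :=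
  𝒪.Pairwise fun O₁ O₂ => Disjoint O₁.edgeSet O₂.edgeSet

/-- A family of subgraphs is pairwise vertex-disjoint. -/
def PairwiseVertexDisjoint {G : SimpleGraph V} (𝒪 : Set G.Subgraph) : Prop :=
  𝒪.Pairwise fun O₁ O₂ => Disjoint O₁.verts O₂.verts

/-- `G` is `r`-regular. -/
def IsRegular (G : SimpleGraph V) (r : ℕ) : Prop :=
  ∀ v : V, (G.neighborSet v).ncard = r

/-- `G` is 2-connected: connected, at least 3 vertices, and no cut vertex. -/
def TwoConnected [Fintype V] (G : SimpleGraph V) : Prop :=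
  G.Connected ∧ 3 ≤ Fintype.card V ∧ ∀ v : V, (G.induce {u | u ≠ v}).Connected

/-- `G` is `r`-connected: more than `r` vertices and deleting fewer than `r`
vertices leaves it connected. -/
def KConnected [Fintype V] (r : ℕ) (G : SimpleGraph V) : Prop :=
  r < Fintype.card V ∧ ∀ S : Set V, S.ncard < r → (G.induce Sᶜ).Connected

/-- A set of edges is a matching: pairwise non-adjacent edges. -/
def IsMatchingSet (M : Set (Sym2 V)) : Prop :=
  M.Pairwise fun e f => ∀ v : V, v ∈ e → v ∉ f

section Construction

abbrev Vtx (r : ℕ) : Type := Fin 3 × (Fin (r-2) ⊕ Fin r)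

def adjFun (r : ℕ) : Vtx r → Vtx r → Prop := fun u v =>
  match u, v with
  | (s, .inl _), (s', .inr _) => s = s'
  | (s, .inr _), (s', .inl _) => s = s'
  | (s, .inr i), (s', .inr j) => i = j ∧ s ≠ s'
  | (_, .inl _), (_, .inl _) => False

def Gr (r : ℕ) : SimpleGraph (Vtx r) where
  Adj := adjFun r
  symm := by
    refine ⟨?_⟩
    rintro ⟨s, x⟩ ⟨s', y⟩ h
    cases x <;> cases y <;> simp [adjFun] at h ⊢ <;> tauto
  loopless := by
    refine ⟨?_⟩
    rintro ⟨s, x⟩ h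
    cases x <;> simp [adjFun] at h

lemma gr_adj_rr {r : ℕ} {s s' : Fin 3} {i j : Fin r} :
    (Gr r).Adj (s, .inr i) (s', .inr j) ↔ i = j ∧ s ≠ s' := Iff.rfl

lemma gr_adj_lr {r : ℕ} {s s' : Fin 3} {a : Fin (r-2)} {b : Fin r} :
    (Gr r).Adj (s, .inl a) (s', .inr b) ↔ s = s' := Iff.rfl
lemma gr_adj_rl {r : ℕ} {s s' : Fin 3} {a : Fin r} {b : Fin (r-2)} :
    (Gr r).Adj (s, .inr a) (s', .inl b) ↔ s = s' := Iff.rfl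
lemma gr_adj_ll {r : ℕ} {s s' : Fin 3} {a b : Fin (r-2)} :
    ¬ (Gr r).Adj (s, .inl a) (s', .inl b) := fun h => h


lemma nbhd_inl {r : ℕ} (s : Fin 3) (a : Fin (r-2)) :
    (Gr r).neighborSet (s, .inl a) = (fun b : Fin r => ((s, Sum.inr b) : Vtx r)) '' Set.univ := by
  ext ⟨s', y⟩
  cases y with
  | inl b => simp [neighborSet, gr_adj_ll]
  | inr b =>
    simp only [neighborSet, Set.mem_setOf_eq, gr_adj_lr, Set.image_univ, Set.mem_range]
    constructor
    · rintro rfl; exact ⟨b, rfl⟩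
    · rintro ⟨b', hb⟩; cases hb; rfl

lemma nbhd_inr {r : ℕ} (s : Fin 3) (i : Fin r) :
    (Gr r).neighborSet (s, .inr i) =
      ((fun a : Fin (r-2) => ((s, Sum.inl a) : Vtx r)) '' Set.univ) ∪
      ((fun s' : Fin 3 => ((s', Sum.inr i) : Vtx r)) '' {s' | s' ≠ s}) := by
  ext ⟨s', y⟩
  cases y with
  | inl b =>
    simp only [neighborSet, Set.mem_setOf_eq, gr_adj_rl, Set.mem_union, Set.image_univ,
      Set.mem_range, Set.mem_image]
    constructor
    · rintro rfl; exact Or.inl ⟨b, rfl⟩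
    · rintro (⟨b', hb⟩ | ⟨x, _, hx⟩)
      · cases hb; rfl
      · exact absurd hx (by simp)
  | inr j =>
    simp only [neighborSet, Set.mem_setOf_eq, gr_adj_rr, Set.mem_union, Set.image_univ,
      Set.mem_range, Set.mem_image, Set.mem_setOf_eq]
    constructor
    · rintro ⟨rfl, hne⟩; exact Or.inr ⟨s', fun h => hne h.symm, rfl⟩
    · rintro (⟨b', hb⟩ | ⟨x, hx, hxe⟩)
      · exact absurd hb (by simp)
      · obtain ⟨rfl, rfl⟩ : x = s' ∧ i = j := by
          constructor <;> [exact congrArg Prod.fst hxe; exact Sum.inr.inj (congrArg Prod.snd hxe)]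
        exact ⟨rfl, fun h => hx h.symm⟩

lemma gr_regular {r : ℕ} (hr : 3 ≤ r) (v : Vtx r) : ((Gr r).neighborSet v).ncard = r := by
  obtain ⟨s, x⟩ := v
  cases x with
  | inl a =>
    rw [nbhd_inl, Set.ncard_image_of_injective _ (by intro a b h; simpa using h), Set.ncard_univ]
    simp
  | inr i =>
    rw [nbhd_inr, Set.ncard_union_eq]
    · rw [Set.ncard_image_of_injective _ (by intro a b h; simpa using h),
        Set.ncard_image_of_injective _ (by intro a b h; simpa using h), Set.ncard_univ]
      have : {s' : Fin 3 | s' ≠ s}.ncard = 2 := by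
        have h2 : {s' : Fin 3 | s' ≠ s} = Set.univ \ {s} := by ext; simp
        rw [h2, Set.ncard_diff (by simp), Set.ncard_univ, Set.ncard_singleton]
        simp
      rw [this]
      simp only [Nat.card_eq_fintype_card, Fintype.card_fin]
      omega
    · rw [Set.disjoint_left]
      rintro v ⟨a, _, rfl⟩ ⟨s', _, h⟩
      exact absurd (congrArg Prod.snd h) (by simp)


def w {r : ℕ} (i : Fin r) (s : Fin 3) : Vtx r := (s, Sum.inr i)

lemma w_inj {r : ℕ} (i : Fin r) : Function.Injective (w i) := by
  intro a b h; simpa [w] using h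

def Tri {r : ℕ} (i : Fin r) : (Gr r).Subgraph where
  verts := Set.range (w i)
  Adj u v := u ∈ Set.range (w i) ∧ v ∈ Set.range (w i) ∧ u ≠ v
  adj_sub := by
    rintro u v ⟨⟨s, rfl⟩, ⟨s', rfl⟩, hne⟩
    exact gr_adj_rr.2 ⟨rfl, fun h => hne (by rw [h])⟩
  edge_vert := by rintro u v ⟨hu, _, _⟩; exact hu
  symm := by refine ⟨?_⟩; rintro u v ⟨hu, hv, hne⟩; exact ⟨hv, hu, hne.symm⟩

lemma tri_connected {r : ℕ} (i : Fin r) : (Tri i).Connected := by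
  haveI : Nonempty ↑(Tri i).verts := ⟨⟨w i 0, 0, rfl⟩⟩
  refine Subgraph.connected_iff'.2 (SimpleGraph.Connected.mk fun u v => ?_)
  by_cases h : u = v
  · rw [h]
  · refine SimpleGraph.Adj.reachable ?_
    show (Tri i).Adj ↑u ↑v
    exact ⟨u.2, v.2, fun he => h (Subtype.ext he)⟩
  

lemma tri_verts_ncard {r : ℕ} (i : Fin r) : (Tri i).verts.ncard = 3 := by
  show (Set.range (w i)).ncard = 3
  rw [← Set.image_univ, Set.ncard_image_of_injective _ (w_inj i), Set.ncard_univ]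
  simp

lemma tri_deg {r : ℕ} (i : Fin r) (v : Vtx r) (hv : v ∈ (Tri i).verts) :
    ((Tri i).neighborSet v).ncard = 2 := by
  have h : (Tri i).neighborSet v = (Tri i).verts \ {v} := by
    ext u
    simp only [Subgraph.mem_neighborSet, Set.mem_diff, Set.mem_singleton_iff]
    constructor
    · rintro ⟨_, hu, hne⟩; exact ⟨hu, fun h => hne h.symm⟩
    · rintro ⟨hu, hne⟩; exact ⟨hv, hu, fun h => hne h.symm⟩
  rw [h, Set.ncard_diff_singleton_of_mem hv, tri_verts_ncard]

lemma tri_edgeSet {r : ℕ} (i : Fin r) :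
    (Tri i).edgeSet = {s(w i 0, w i 1), s(w i 0, w i 2), s(w i 1, w i 2)} := by
  ext e
  induction e with
  | _ u v =>
    rw [SimpleGraph.Subgraph.mem_edgeSet]
    constructor
    · rintro ⟨⟨s, rfl⟩, ⟨s', rfl⟩, hne⟩
      have hss : s ≠ s' := fun h => hne (by rw [h])
      fin_cases s <;> fin_cases s' <;> simp_all [Sym2.eq_iff]
    · intro h
      simp only [Set.mem_insert_iff, Set.mem_singleton_iff, Sym2.eq_iff] at h
      have hne : ∀ (a b : Fin 3), a ≠ b → (Tri i).Adj (w i a) (w i b) := by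
        intro a b hab
        exact ⟨⟨a, rfl⟩, ⟨b, rfl⟩, fun h => hab (w_inj i h)⟩
      rcases h with (⟨rfl,rfl⟩|⟨rfl,rfl⟩) | (⟨rfl,rfl⟩|⟨rfl,rfl⟩) | (⟨rfl,rfl⟩|⟨rfl,rfl⟩) <;>
        exact hne _ _ (by decide)

lemma tri_edge_ncard {r : ℕ} (i : Fin r) : (Tri i).edgeSet.ncard = 3 := by
  rw [tri_edgeSet]
  have h1 : s(w i 0, w i 1) ≠ s(w i 0, w i 2) := by
    rw [Ne, Sym2.eq_iff]
    rintro (⟨-, h⟩ | ⟨h, -⟩) <;> exact absurd (w_inj i h) (by decide)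
  have h2 : s(w i 0, w i 1) ≠ s(w i 1, w i 2) := by
    rw [Ne, Sym2.eq_iff]
    rintro (⟨h, -⟩ | ⟨h, -⟩) <;> exact absurd (w_inj i h) (by decide)
  have h3 : s(w i 0, w i 2) ≠ s(w i 1, w i 2) := by
    rw [Ne, Sym2.eq_iff]
    rintro (⟨h, -⟩ | ⟨-, h⟩) <;> exact absurd (w_inj i h) (by decide)
  rw [Set.ncard_insert_of_notMem (by simp [h1, h2]),
    Set.ncard_insert_of_notMem (by simp [h3]), Set.ncard_singleton]

open Finset in
lemma darts_count {r t : ℕ} (F : (Gr r).Subgraph)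
    (hreg : ∀ v, (F.neighborSet v).ncard = t)
    (P : Vtx r → Prop) [DecidablePred P] [DecidableRel F.Adj] :
    (univ.filter fun p : Vtx r × Vtx r => F.Adj p.1 p.2 ∧ P p.1).card
      = (univ.filter P).card * t := by
  rw [Finset.card_eq_sum_card_fiberwise
    (f := Prod.fst) (t := univ.filter P) (by intro p hp; simp at hp ⊢; exact hp.2)]
  rw [Finset.sum_congr rfl (g := fun _ => t) ?_, Finset.sum_const, smul_eq_mul]
  intro v hv
  have hnb : (univ.filter fun w => F.Adj v w).card = t := by
    have h1 : F.neighborSet v = ↑(univ.filter fun w => F.Adj v w) := by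
      ext w; simp [SimpleGraph.Subgraph.mem_neighborSet]
    have := hreg v
    rwa [h1, Set.ncard_coe_finset] at this
  rw [← hnb]
  refine Finset.card_bij' (fun p _ => p.2) (fun w _ => (v, w)) ?_ ?_ ?_ ?_
  · intro p hp
    simp only [Finset.mem_filter, Finset.mem_univ, true_and] at hp ⊢
    obtain ⟨⟨ha, -⟩, h2⟩ := hp
    rwa [h2] at ha
  · intro w hw
    simp only [Finset.mem_filter, Finset.mem_univ, true_and] at hw hv ⊢
    exact ⟨⟨hw, hv⟩, trivial⟩
  · intro p hp
    simp only [Finset.mem_filter] at hp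
    exact Prod.ext hp.2.symm rfl
  · intro w hw; rfl

lemma adj_notB {r : ℕ} {x y : Vtx r} (h : (Gr r).Adj x y) (hx : ¬ x.2.isRight = true) :
    y.2.isRight = true := by
  obtain ⟨s, a⟩ := x; obtain ⟨s', b⟩ := y
  have h' : adjFun r (s, a) (s', b) := h
  cases a <;> cases b <;> simp_all [adjFun]

lemma tri_vert_form {r : ℕ} {i : Fin r} {x : Vtx r} (hx : x ∈ Set.range (w i)) :
    ∃ s, x = (s, Sum.inr i) := by
  obtain ⟨s, rfl⟩ := hx; exact ⟨s, rfl⟩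

open Finset in
lemma counting {r t : ℕ} (hr : 3 ≤ r) (F : (Gr r).Subgraph)
    (hreg : ∀ v, (F.neighborSet v).ncard = t)
    (hits : ∀ i : Fin r, (F.edgeSet ∩ (Tri i).edgeSet).Nonempty) : r ≤ 3 * t := by
  classical
  -- cardinalities of the two sides
  have hBF : (univ.filter fun v : Vtx r => v.2.isRight = true).card = 3 * r := by
    have himg : (univ.filter fun v : Vtx r => v.2.isRight = true)
        = univ.image (fun p : Fin 3 × Fin r => ((p.1, Sum.inr p.2) : Vtx r)) := by
      ext ⟨s, x⟩
      cases x <;> simp [Prod.ext_iff]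
    rw [himg, Finset.card_image_of_injective _ (by
      intro p q h; simpa [Prod.ext_iff] using h)]
    simp
  have hAF : (univ.filter fun v : Vtx r => ¬ v.2.isRight = true).card = 3 * (r - 2) := by
    have himg : (univ.filter fun v : Vtx r => ¬ v.2.isRight = true)
        = univ.image (fun p : Fin 3 × Fin (r-2) => ((p.1, Sum.inl p.2) : Vtx r)) := by
      ext ⟨s, x⟩
      cases x <;> simp [Prod.ext_iff]
    rw [himg, Finset.card_image_of_injective _ (by
      intro p q h; simpa [Prod.ext_iff] using h)]
    simp
  set DB := univ.filter (fun p : Vtx r × Vtx r => F.Adj p.1 p.2 ∧ p.1.2.isRight = true) with hDBdef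
  set DA := univ.filter (fun p : Vtx r × Vtx r => F.Adj p.1 p.2 ∧ ¬ p.1.2.isRight = true) with hDAdef
  set D := DB.filter (fun p => p.2.2.isRight = true) with hDdef
  set C := DB.filter (fun p => ¬ p.2.2.isRight = true) with hCdef
  have hsplit : D.card + C.card = DB.card := Finset.card_filter_add_card_filter_not _
  have hDB : DB.card = 3 * r * t := by
    rw [hDBdef, ← hBF]
    exact darts_count F hreg (fun v : Vtx r => v.2.isRight = true)
  have hDA : DA.card = 3 * (r - 2) * t := by
    rw [hDAdef, ← hAF]
    exact darts_count F hreg (fun v : Vtx r => ¬ v.2.isRight = true)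
  have hCA : C.card = DA.card := by
    refine Finset.card_bij' (fun p _ => p.swap) (fun p _ => p.swap) ?_ ?_ ?_ ?_
    · intro p hp
      simp only [hCdef, hDBdef, hDAdef, Finset.mem_filter, Finset.mem_univ, true_and] at hp ⊢
      exact ⟨hp.1.1.symm, hp.2⟩
    · intro p hp
      simp only [hCdef, hDBdef, hDAdef, Finset.mem_filter, Finset.mem_univ, true_and] at hp ⊢
      refine ⟨⟨hp.1.symm, ?_⟩, ?_⟩
      · exact adj_notB (F.adj_sub hp.1) hp.2
      · simpa using hp.2
    · intro p _; rfl
    · intro p _; rfl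
  -- lower bound on D
  have hex : ∀ i : Fin r, ∃ p : Vtx r × Vtx r, F.Adj p.1 p.2 ∧ (Tri i).Adj p.1 p.2 := by
    intro i
    obtain ⟨e, heF, heT⟩ := hits i
    induction e with
    | _ x y => exact ⟨(x, y), SimpleGraph.Subgraph.mem_edgeSet.1 heF,
        SimpleGraph.Subgraph.mem_edgeSet.1 heT⟩
  choose g hgF hgT using hex
  have hform : ∀ i : Fin r, (∃ s, (g i).1 = (s, Sum.inr i)) ∧ (∃ s, (g i).2 = (s, Sum.inr i)) :=
    fun i => ⟨tri_vert_form (hgT i).1, tri_vert_form (hgT i).2.1⟩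
  set f : Fin r × Bool → Vtx r × Vtx r :=
    fun q => if q.2 then g q.1 else (g q.1).swap with hfdef
  have hfst : ∀ (i : Fin r) (b : Bool), ∃ s, (f (i, b)).1 = (s, Sum.inr i) := by
    intro i b
    obtain ⟨⟨s1, h1⟩, ⟨s2, h2⟩⟩ := hform i
    cases b
    · exact ⟨s2, by simpa [hfdef] using h2⟩
    · exact ⟨s1, by simpa [hfdef] using h1⟩
  have hmaps : ∀ q : Fin r × Bool, f q ∈ D := by
    rintro ⟨i, b⟩
    obtain ⟨⟨s1, h1⟩, ⟨s2, h2⟩⟩ := hform i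
    have hB1 : (g i).1.2.isRight = true := by rw [h1]; rfl
    have hB2 : (g i).2.2.isRight = true := by rw [h2]; rfl
    have hadj := hgF i
    cases b <;>
      · simp only [hfdef, hDdef, hDBdef, Bool.false_eq_true, if_false, if_true,
          Finset.mem_filter, Finset.mem_univ, true_and, Prod.fst_swap, Prod.snd_swap]
        first
        | exact ⟨⟨hadj.symm, hB2⟩, hB1⟩
        | exact ⟨⟨hadj, hB1⟩, hB2⟩
  have hne' : ∀ i, (g i).1 ≠ (g i).2 := fun i => (F.adj_sub (hgF i)).ne
  have hinj : Set.InjOn f ↑(univ : Finset (Fin r × Bool)) := by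
    rintro ⟨i, b⟩ - ⟨j, b'⟩ - heq
    obtain ⟨s, hs⟩ := hfst i b
    obtain ⟨s', hs'⟩ := hfst j b'
    have hij : i = j := by
      have h := congrArg Prod.snd (hs ▸ hs' ▸ congrArg Prod.fst heq : ((s, Sum.inr i) : Vtx r) = (s', Sum.inr j))
      exact Sum.inr.inj h
    subst hij
    have hbb : b = b' := by
      by_contra hbne
      cases b <;> cases b'
      · exact absurd rfl hbne
      · exact hne' i (congrArg Prod.fst heq).symm
      · exact hne' i (congrArg Prod.fst heq)
      · exact absurd rfl hbne
    rw [hbb]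
  have hcard : 2 * r ≤ D.card := by
    have h := Finset.card_le_card_of_injOn f (fun q _ => hmaps q) hinj
    simpa [mul_comm] using h
  have hx : D.card + C.card = 3 * r * t := by rw [hsplit, hDB]
  rw [hCA, hDA] at hx
  have hrt : 3 * r * t = 3 * (r - 2) * t + 6 * t := by
    have h2 : r = (r - 2) + 2 := by omega
    calc 3 * r * t = 3 * ((r - 2) + 2) * t := by rw [← h2]
      _ = 3 * (r - 2) * t + 6 * t := by ring
  set x := 3 * (r - 2) * t
  omega

lemma exists_anchor {r : ℕ} (hr : 3 ≤ r) (S : Set (Vtx r)) (hS : S.ncard < r) :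
    ∃ i₀ : Fin r, ∀ s : Fin 3, ((s, Sum.inr i₀) : Vtx r) ∉ S := by
  by_contra h
  push_neg at h
  choose σ hσ using h
  have hinj : Function.Injective (fun i : Fin r => ((σ i, Sum.inr i) : Vtx r)) := by
    intro i j hij
    simpa using congrArg Prod.snd hij
  have hsub : Set.range (fun i : Fin r => ((σ i, Sum.inr i) : Vtx r)) ⊆ S := by
    rintro v ⟨i, rfl⟩; exact hσ i
  have h1 : (Set.range (fun i : Fin r => ((σ i, Sum.inr i) : Vtx r))).ncard = r := by
    rw [← Set.image_univ, Set.ncard_image_of_injective _ hinj, Set.ncard_univ]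
    simp
  have := Set.ncard_le_ncard hsub (Set.toFinite S)
  omega

lemma As_ncard {r : ℕ} (s : Fin 3) :
    ((fun a : Fin (r-2) => ((s, Sum.inl a) : Vtx r)) '' Set.univ).ncard = r - 2 := by
  rw [Set.ncard_image_of_injective _ (by intro a b h; simpa using h), Set.ncard_univ]
  simp

lemma good_column {r : ℕ} (hr : 3 ≤ r) (S : Set (Vtx r)) (hS : S.ncard < r)
    {s : Fin 3} (hAs : ∀ a : Fin (r-2), ((s, Sum.inl a) : Vtx r) ∈ S) (i : Fin r) :
    ∃ s' : Fin 3, s' ≠ s ∧ ((s', Sum.inr i) : Vtx r) ∉ S ∧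
      ∃ a : Fin (r-2), ((s', Sum.inl a) : Vtx r) ∉ S := by
  by_contra h
  push_neg at h
  -- each bad column contributes a vertex of S outside As
  have hpick : ∀ s' : Fin 3, s' ≠ s → ∃ v : Vtx r, v ∈ S ∧ v.1 = s' := by
    intro s' hs'
    rcases Classical.em (((s', Sum.inr i) : Vtx r) ∈ S) with hin | hout
    · exact ⟨(s', Sum.inr i), hin, rfl⟩
    · obtain ⟨a0⟩ : Nonempty (Fin (r-2)) := ⟨⟨0, by omega⟩⟩
      exact ⟨(s', Sum.inl a0), h s' hs' hout a0, rfl⟩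
  have h1ne : s + 1 ≠ s := by omega
  have h2ne : s + 2 ≠ s := by omega
  obtain ⟨p1, hp1S, hp1⟩ := hpick (s+1) h1ne
  obtain ⟨p2, hp2S, hp2⟩ := hpick (s+2) h2ne
  set As : Set (Vtx r) := (fun a : Fin (r-2) => ((s, Sum.inl a) : Vtx r)) '' Set.univ with hAsdef
  have hp1A : p1 ∉ As := by
    rintro ⟨a, -, ha⟩
    exact h1ne (by rw [← hp1, ← ha])
  have hp2A : p2 ∉ As := by
    rintro ⟨a, -, ha⟩
    exact h2ne (by rw [← hp2, ← ha])
  have hp12 : p1 ≠ p2 := by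
    intro h'
    have : s + 1 = s + 2 := by rw [← hp1, ← hp2, h']
    omega
  have hsub : insert p1 (insert p2 As) ⊆ S := by
    rintro v (rfl | rfl | ⟨a, -, rfl⟩)
    · exact hp1S
    · exact hp2S
    · exact hAs a
  have hcard : (insert p1 (insert p2 As)).ncard = r := by
    rw [Set.ncard_insert_of_notMem (by simp [hp12, hp1A]),
      Set.ncard_insert_of_notMem hp2A, As_ncard]
    omega
  have := Set.ncard_le_ncard hsub (Set.toFinite S)
  omega

lemma gr_connected {r : ℕ} (hr : 3 ≤ r) (S : Set (Vtx r)) (hS : S.ncard < r) :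
    ((Gr r).induce Sᶜ).Connected := by
  obtain ⟨i₀, hi₀⟩ := exists_anchor hr S hS
  set ind := (Gr r).induce Sᶜ with hind
  have h0 : ((0, Sum.inr i₀) : Vtx r) ∈ Sᶜ := hi₀ 0
  set anchor : ↥(Sᶜ) := ⟨(0, Sum.inr i₀), h0⟩ with hanchor
  have step : ∀ (u v : ↥(Sᶜ)), (Gr r).Adj ↑u ↑v → ind.Reachable u v := by
    intro u v h
    exact SimpleGraph.Adj.reachable (by exact h)
  have reachB0 : ∀ (s : Fin 3) (hs : ((s, Sum.inr i₀) : Vtx r) ∈ Sᶜ),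
      ind.Reachable ⟨(s, Sum.inr i₀), hs⟩ anchor := by
    intro s hs
    by_cases h : s = 0
    · subst h; exact SimpleGraph.Reachable.refl _
    · exact step _ _ (gr_adj_rr.2 ⟨rfl, h⟩)
  have reachA : ∀ (s : Fin 3) (a : Fin (r-2)) (h : ((s, Sum.inl a) : Vtx r) ∈ Sᶜ),
      ind.Reachable ⟨(s, Sum.inl a), h⟩ anchor := by
    intro s a h
    have hmid : ((s, Sum.inr i₀) : Vtx r) ∈ Sᶜ := hi₀ s
    exact (step ⟨_, h⟩ ⟨_, hmid⟩ (gr_adj_lr.2 rfl)).trans (reachB0 s hmid)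
  have reachB : ∀ (s : Fin 3) (i : Fin r) (h : ((s, Sum.inr i) : Vtx r) ∈ Sᶜ),
      ind.Reachable ⟨(s, Sum.inr i), h⟩ anchor := by
    intro s i h
    by_cases hA : ∃ a : Fin (r-2), ((s, Sum.inl a) : Vtx r) ∉ S
    · obtain ⟨a, ha⟩ := hA
      exact (step ⟨_, h⟩ ⟨_, ha⟩ (gr_adj_rl.2 rfl)).trans (reachA s a ha)
    · push_neg at hA
      obtain ⟨s', hs'ne, hBi, a, ha⟩ := good_column hr S hS hA i
      refine ((step ⟨_, h⟩ ⟨_, hBi⟩ (gr_adj_rr.2 ⟨rfl, fun he => hs'ne he.symm⟩)).trans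
        ((step ⟨_, hBi⟩ ⟨_, ha⟩ (gr_adj_rl.2 rfl)).trans (reachA s' a ha)))
  have reach : ∀ v : ↥(Sᶜ), ind.Reachable v anchor := by
    rintro ⟨⟨s, x⟩, hv⟩
    cases x with
    | inl a => exact reachA s a hv
    | inr i => exact reachB s i hv
  haveI : Nonempty ↥(Sᶜ) := ⟨anchor⟩
  exact SimpleGraph.Connected.mk fun u v => (reach u).trans (reach v).symm

end Construction

/-- For every `r ≥ 3` there is an `r`-connected `r`-regular graph of even order and a
set of pairwise vertex-disjoint odd cycles such that any `t`-factor meeting every cycle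
of the set satisfies `3t ≥ r`. -/
theorem stmt_3 (r : ℕ) (hr : 3 ≤ r) :
    ∃ (V : Type) (_ : Fintype V) (G : SimpleGraph V) (𝒪 : Set G.Subgraph),
      KConnected r G ∧ IsRegular G r ∧ Even (Fintype.card V) ∧
      (∀ O ∈ 𝒪, IsOddCycleSG O) ∧ PairwiseVertexDisjoint 𝒪 ∧
      ∀ t : ℕ, 1 ≤ t → ∀ F : G.Subgraph, IsTFactor F t →
        (∀ O ∈ 𝒪, (F.edgeSet ∩ O.edgeSet).Nonempty) → 3 * t ≥ r := by
  refine ⟨Vtx r, inferInstance, Gr r, Set.range (fun i : Fin r => Tri i), ?_, ?_, ?_, ?_, ?_, ?_⟩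
  · constructor
    · have : Fintype.card (Vtx r) = 3 * ((r - 2) + r) := by simp
      rw [this]; omega
    · intro S hS
      exact gr_connected hr S hS
  · intro v
    exact gr_regular hr v
  · have : Fintype.card (Vtx r) = 3 * ((r - 2) + r) := by simp
    rw [this, Nat.even_iff]; omega
  · rintro O ⟨i, rfl⟩
    refine ⟨⟨tri_connected i, fun v hv => tri_deg i v hv⟩, ?_⟩
    rw [tri_edge_ncard i]
    exact ⟨1, rfl⟩
  · rintro _ ⟨i, rfl⟩ _ ⟨j, rfl⟩ hne
    have hij : i ≠ j := fun h => hne (by rw [h])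
    rw [Set.disjoint_left]
    rintro v ⟨s, rfl⟩ ⟨s', hv⟩
    exact hij (Sum.inr.inj (congrArg Prod.snd hv)).symm
  · rintro t ht F ⟨hspan, hdeg⟩ hmeet
    exact counting hr F hdeg (fun i => hmeet (Tri i) ⟨i, rfl⟩)

end PaperFormalization
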